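/- arXiv:1407.0896 — 3 statements merged into one kernel-verified Lean document; each statement's English description precedes it below -/
import Mathlib

section
/- Let F be a random variable in ℝ^N with law μ_F. Then μ_F is locally lower bounded by the Lebesgue measure (μ_F ⪰ Leb_N) if and only if there exist a non-negative finite Borel measure μ on ℝ^N with μ(ℝ^N) < 1 and a non-negative lower semicontinuous function p : ℝ^N → [0,∞) with ∫_{ℝ^N} p(v) dv = 1 − μ(ℝ^N), such that μ_F(dv) = μ(dv) + p(v) dv. -/
open MeasureTheory ProbabilityTheory Filter

noncomputable section

namespace BallyCaramellino

abbrev Euc (N : ℕ) := EuclideanSpace ℝ (Fin N)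

/-- `μ(A) ≥ ε₀ · Leb(A ∩ D₀)` for all Borel `A`. -/
def LowerBoundedWith {N : ℕ} (μ : Measure (Euc N)) (ε₀ : ℝ) (D₀ : Set (Euc N)) : Prop :=
  ∀ A : Set (Euc N), MeasurableSet A → ENNReal.ofReal ε₀ * volume (A ∩ D₀) ≤ μ A

/-- `μ` is locally lower bounded by the Lebesgue measure. -/
def LocLowerBounded {N : ℕ} (μ : Measure (Euc N)) : Prop :=
  ∃ ε₀ : ℝ, 0 < ε₀ ∧ ∃ D₀ : Set (Euc N), IsOpen D₀ ∧ D₀.Nonempty ∧ LowerBoundedWith μ ε₀ D₀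

/-- density of the centred Gaussian law with covariance `δ·I` on `ℝ^N`. -/
def gaussDensity (N : ℕ) (δ : ℝ) (x : Euc N) : ℝ :=
  (2 * Real.pi * δ) ^ (-(N : ℝ) / 2) * Real.exp (-‖x‖ ^ 2 / (2 * δ))

/-- the standard Gaussian law on `ℝ^N`. -/
def stdGaussian (N : ℕ) : Measure (Euc N) :=
  volume.withDensity fun x => ENNReal.ofReal (gaussDensity N 1 x)

/-- total variation distance between two measures on `ℝ^N`. -/
def dTV {N : ℕ} (μ ν : Measure (Euc N)) : ℝ :=
  sSup { d : ℝ | ∃ f : Euc N → ℝ, Measurable f ∧ (∀ x, |f x| ≤ 1) ∧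
    d = |(∫ x, f x ∂μ) - ∫ x, f x ∂ν| }

/-- `x^α = ∏ x^{α_i}` for a multiindex `α`. -/
def mprod {N : ℕ} (α : List (Fin N)) (x : Euc N) : ℝ := (α.map fun i => x i).prod

/-- `∂_α f`, the iterated partial derivative along the multiindex `α`
(the head of the list being the outermost derivative). -/
def pderiv {N : ℕ} : List (Fin N) → (Euc N → ℝ) → Euc N → ℝ
  | [], f => f
  | i :: α, f => fun x => fderiv ℝ (pderiv α f) x (EuclideanSpace.single i 1)

/-- `θ_β = 1` if `β` has even length and `β_{2j-1} = β_{2j}` for all `j`, else `0`. -/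
def theta {N : ℕ} : List (Fin N) → ℝ
  | [] => 1
  | [_] => 0
  | a :: b :: l => if a = b then theta l else 0

/-- sum over all multiindexes of length `p` with entries in `{1,…,N}`. -/
def msum {N : ℕ} (p : ℕ) (g : List (Fin N) → ℝ) : ℝ :=
  ∑ a : Fin p → Fin N, g (List.ofFn a)

/-- `Δ_α = E(F^α) - E(G^α)`, where `F` has law `μ` and `G` is standard Gaussian. -/
def Delta {N : ℕ} (μ : Measure (Euc N)) (α : List (Fin N)) : ℝ :=
  (∫ x, mprod α x ∂μ) - ∫ x, mprod α x ∂(stdGaussian N)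

/-- `sup_{|α| ≤ r} |Δ_α|`. -/
def supDelta {N : ℕ} (μ : Measure (Euc N)) (r : ℕ) : ℝ :=
  ⨆ γ : {γ : List (Fin N) // γ.length ≤ r}, |Delta μ γ.1|

/-- membership in `C_b^m`: `m` times continuously differentiable with bounded derivatives. -/
def CbBounded {N : ℕ} (m : ℕ) (f : Euc N → ℝ) : Prop :=
  ContDiff ℝ (m : ℕ∞) f ∧ ∀ i : ℕ, i ≤ m → ∃ C : ℝ, ∀ x, ‖iteratedFDeriv ℝ i f x‖ ≤ C

/-- the differential operator `Ψ_t`. -/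
def Psi {N : ℕ} (μ : Measure (Euc N)) (t : ℕ) (f : Euc N → ℝ) : Euc N → ℝ :=
  fun x => ∑ p ∈ Finset.range (t + 1),
    ((-1 : ℝ) ^ ((t - p) / 2) /
        (2 ^ ((t - p) / 2) * (Nat.factorial p) * (Nat.factorial ((t - p) / 2)))) *
      msum p (fun α => msum (t - p) (fun β => theta β * Delta μ α * pderiv (β ++ α) f x))

/-- the iterated operators `Ψ^{(k)}_t` (with `Ψ^{(0)} := 0`). -/
def Psik {N : ℕ} (μ : Measure (Euc N)) : ℕ → ℕ → (Euc N → ℝ) → Euc N → ℝ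
  | 0, _, _ => fun _ => 0
  | 1, t, f => Psi μ t f
  | (k + 2), t, f => fun x =>
      Psik μ (k + 1) t f x +
        ∑ p ∈ Finset.range (t + 1), Psi μ p (Psik μ (k + 1) (t - p) f) x

/-- the operators `𝒜^i_t` (with `𝒜^0 := 0`). -/
def Aop {N : ℕ} (μ : Measure (Euc N)) : ℕ → ℕ → (Euc N → ℝ) → Euc N → ℝ
  | 0, _, _ => fun _ => 0
  | 1, t, f => Psi μ t f
  | (i + 2), t, f => fun x => ∑ p ∈ Finset.range (t + 1), Psi μ p (Aop μ (i + 1) (t - p) f) x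

/-- the coefficients `Q_l(k)`. -/
def Qcoef : ℕ → ℕ → ℝ
  | 0, _ => 1
  | (l + 1), k => ∑ j ∈ Finset.Icc (l + 2) k, Qcoef l (j - 1)

/-- `S_l(L) = Σ_{k=1}^L k^l`. -/
def Snat (l L : ℕ) : ℝ := ∑ k ∈ Finset.Icc 1 L, (k : ℝ) ^ l

/-- the coefficients `b_{l,q}` built from the (second) Bernoulli numbers. -/
def bCoef (l q : ℕ) : ℝ :=
  (1 / ((l : ℝ) + 1)) * ∑ p ∈ Finset.Icc (max q 1) (l + 1),
    (Nat.choose (l + 1) p : ℝ) * ((bernoulli' (l + 1 - p) : ℚ) : ℝ) *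
      (Nat.choose p q : ℝ) * (-1 : ℝ) ^ (p - q)

/-- the coefficients `a_{i,p}`. -/
def aCoef : ℕ → ℕ → ℝ
  | 0, _ => 0
  | 1, p => if p = 1 then 1 else 0
  | (i + 2), p =>
      if p = 0 then
        (∑ l ∈ Finset.range (i + 2), aCoef (i + 1) l * bCoef l 0) -
          ∑ l ∈ Finset.range (i + 2), aCoef (i + 1) l * Snat l i
      else ∑ l ∈ Finset.Icc (p - 1) (i + 1), aCoef (i + 1) l * bCoef l p

/-- the one-dimensional Hermite polynomial `H_m(x) = (-1)^m e^{x²/2} (d/dx)^m e^{-x²/2}`. -/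
def hermiteFun (m : ℕ) (x : ℝ) : ℝ :=
  (-1 : ℝ) ^ m * Real.exp (x ^ 2 / 2) * iteratedDeriv m (fun y => Real.exp (-y ^ 2 / 2)) x

/-- the multidimensional Hermite polynomial `H_γ(x) = ∏ H_{β_i(γ)}(x_i)`. -/
def hermiteMulti {N : ℕ} (γ : List (Fin N)) (x : Euc N) : ℝ :=
  ∏ i : Fin N, hermiteFun (γ.count i) (x i)

/-- the coefficient `c^1_γ`. -/
def cCoefOne {N : ℕ} (μ : Measure (Euc N)) (γ : List (Fin N)) : ℝ :=
  ∑ j ∈ Finset.range (γ.length + 1),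
    ((-1 : ℝ) ^ ((γ.drop j).length / 2) /
        (2 ^ ((γ.drop j).length / 2) * (Nat.factorial (γ.take j).length) *
          (Nat.factorial ((γ.drop j).length / 2)))) *
      Delta μ (γ.take j) * theta (γ.drop j)

/-- the coefficients `c^i_γ` (with `c^0 := 0`). -/
def cCoef {N : ℕ} (μ : Measure (Euc N)) : ℕ → List (Fin N) → ℝ
  | 0, _ => 0
  | 1, γ => cCoefOne μ γ
  | (i + 2), γ => ∑ j ∈ Finset.range (γ.length + 1),
      cCoefOne μ (γ.take j) * cCoef μ (i + 1) (γ.drop j)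

/-- `𝓗^i_t(x) = Σ_{|γ|=t} c^i_γ H_γ(x)`. -/
def Hpoly {N : ℕ} (μ : Measure (Euc N)) (i t : ℕ) (x : Euc N) : ℝ :=
  msum t (fun γ => cCoef μ i γ * hermiteMulti γ x)

/-- the polynomial `𝒦_m`. -/
def Kpoly {N : ℕ} (μ : Measure (Euc N)) (m : ℕ) (x : Euc N) : ℝ :=
  ∑ t ∈ (Finset.Icc (max 3 m) (3 * m)).filter (fun t => (t - m) % 2 = 0),
    ∑ i ∈ Finset.Icc (max 1 ((t - m) / 2)) (t / 3),
      aCoef i ((t - m) / 2) * Hpoly μ i t x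

/-- the Taylor remainder `U_r f(x,y)`. -/
def Ur {N : ℕ} (r : ℕ) (f : Euc N → ℝ) (x y : Euc N) : ℝ :=
  (1 / (Nat.factorial r : ℝ)) * msum (r + 1) (fun α =>
    mprod α y * ∫ l in (0:ℝ)..1, (1 - l) ^ r * pderiv α f (x + l • y))

/-- the normalized sum `S_n`. -/
def Sn {N : ℕ} {Ω : Type*} (Fk : ℕ → Ω → Euc N) (n : ℕ) (ω : Ω) : Euc N :=
  (Real.sqrt n)⁻¹ • ∑ i ∈ Finset.Icc 1 n, Fk i ω

/-- the hybrid sum `S_n^k`. -/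
def Shyb {N : ℕ} {Ω : Type*} (Fk Gk : ℕ → Ω → Euc N) (n k : ℕ) (ω : Ω) : Euc N :=
  (Real.sqrt n)⁻¹ •
    ((∑ i ∈ Finset.Icc 1 k, Fk i ω) + ∑ i ∈ Finset.Icc (k + 1) n, Gk i ω)

/-- the hybrid sum `Ŝ_n^k`. -/
def ShatHyb {N : ℕ} {Ω : Type*} (Fk Gk : ℕ → Ω → Euc N) (n k : ℕ) (ω : Ω) : Euc N :=
  (Real.sqrt n)⁻¹ •
    ((∑ i ∈ Finset.Icc 1 (k - 1), Fk i ω) + ∑ i ∈ Finset.Icc (k + 1) n, Gk i ω)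

/-- the remainder `𝓡^k_{r,n} f`. -/
def Rrem {N : ℕ} {Ω : Type*} [MeasurableSpace Ω] (P : Measure Ω) (μ : Measure (Euc N))
    (Fk Gk : ℕ → Ω → Euc N) (r n k : ℕ) (f : Euc N → ℝ) : ℝ :=
  (n : ℝ) ^ (((r : ℝ) + 1) / 2) *
      ((∫ ω, Ur r f (ShatHyb Fk Gk n k ω) ((Real.sqrt n)⁻¹ • Fk k ω) ∂P) -
        ∫ ω, Ur r f (ShatHyb Fk Gk n k ω) ((Real.sqrt n)⁻¹ • Gk k ω) ∂P) +
    ∑ p ∈ Finset.range (r + 1),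
      (n : ℝ) ^ (-((((r - p) / 2 : ℕ) : ℝ) + 1 / 2 - ((r - p : ℕ) : ℝ) / 2)) *
        ((-1 : ℝ) ^ ((r - p) / 2 + 1) /
          ((Nat.factorial p) * (Nat.factorial ((r - p) / 2)) * 2 ^ ((r - p) / 2 + 1))) *
        msum p (fun α => msum (2 * ((r - p) / 2) + 2) (fun β =>
          Delta μ α * theta β *
            ∫ s in (0:ℝ)..1, s ^ ((r - p) / 2) *
              ∫ ω, pderiv (β ++ α) f
                (ShatHyb Fk Gk n k ω + Real.sqrt s • ((Real.sqrt n)⁻¹ • Gk k ω)) ∂P))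

/-- the remainder `Φ^{(k)}_{r,n} f`. -/
def Phirem {N : ℕ} {Ω : Type*} [MeasurableSpace Ω] (P : Measure Ω) (μ : Measure (Euc N))
    (Fk Gk : ℕ → Ω → Euc N) (r n k : ℕ) (f : Euc N → ℝ) : ℝ :=
  (∑ j ∈ Finset.Icc 1 (k - 1), ∑ t ∈ Finset.range (r + 1),
      Rrem P μ Fk Gk (r - t) n (k - j) (Psik μ j t f)) +
    Rrem P μ Fk Gk r n k f

/-- the remainder `𝒰^n_r f`. -/
def Uop {N : ℕ} {Ω : Type*} [MeasurableSpace Ω] (P : Measure Ω) (μ : Measure (Euc N))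
    (Fk Gk : ℕ → Ω → Euc N) (r n : ℕ) (f : Euc N → ℝ) : ℝ :=
  ∑ k ∈ Finset.Icc 1 n, Phirem P μ Fk Gk r n k f

/-- the coefficient `𝒟_m f`. -/
def Dcoef {N : ℕ} (μ : Measure (Euc N)) (m : ℕ) (f : Euc N → ℝ) : ℝ :=
  ∑ t ∈ (Finset.Icc (max 3 m) (3 * m)).filter (fun t => (t - m) % 2 = 0),
    ∑ i ∈ Finset.Icc (max 1 ((t - m) / 2)) (t / 3),
      aCoef i ((t - m) / 2) * ∫ x, Aop μ i t f x ∂(stdGaussian N)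

/-- the remainder `ℰ^n_r f`. -/
def Erem {N : ℕ} {Ω : Type*} [MeasurableSpace Ω] (P : Measure Ω) (μ : Measure (Euc N))
    (Fk Gk : ℕ → Ω → Euc N) (r n : ℕ) (f : Euc N → ℝ) : ℝ :=
  (n : ℝ) ^ ((((r / 3 : ℕ) : ℝ) + 1) / 2) *
    ((∑ m ∈ Finset.Icc (r / 3 + 1) r, (n : ℝ) ^ (-(m : ℝ) / 2) *
        ∑ t ∈ (Finset.Icc (max 3 m) (min (3 * m) r)).filter (fun t => (t - m) % 2 = 0),
          ∑ i ∈ Finset.Icc (max 1 ((t - m) / 2)) (t / 3),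
            aCoef i ((t - m) / 2) * ∫ x, Aop μ i t f x ∂(stdGaussian N)) +
      (n : ℝ) ^ (-((r : ℝ) + 1) / 2) * Uop P μ Fk Gk r n f)

/-- the regularization `f_δ = f ∗ γ_δ`. -/
def convGauss {N : ℕ} (f : Euc N → ℝ) (δ : ℝ) (x : Euc N) : ℝ :=
  ∫ y, f (x - y) * gaussDensity N δ y

/-- the covariance matrix `C(F)`. -/
def covMatrix {N : ℕ} {Ω : Type*} [MeasurableSpace Ω] (P : Measure Ω) (F : Ω → Euc N) :
    Matrix (Fin N) (Fin N) ℝ :=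
  Matrix.of fun i j =>
    ∫ ω, (F ω i - ∫ ω', F ω' i ∂P) * (F ω j - ∫ ω', F ω' j ∂P) ∂P

/-- applying a matrix to a vector in Euclidean space. -/
def matVec {N : ℕ} (A : Matrix (Fin N) (Fin N) ℝ) (x : Euc N) : Euc N :=
  (EuclideanSpace.equiv (Fin N) ℝ).symm (A.mulVec fun i => x i)

/-- the localization function `ψ_a`. -/
def psiLoc (a x : ℝ) : ℝ :=
  if |x| ≤ a then 1
  else if |x| < 2 * a then Real.exp (1 - a ^ 2 / (a ^ 2 - (|x| - a) ^ 2))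
  else 0

end BallyCaramellino

open BallyCaramellino

/-- the law of `F` is locally lower bounded by the Lebesgue measure iff it
decomposes as `μ + p·Leb` with `μ` a finite measure of total mass `< 1` and `p` a non-negative
lower semicontinuous function with `∫ p = 1 - μ(ℝ^N)`. -/
theorem stmt0 {N : ℕ} {Ω : Type} [MeasurableSpace Ω] (P : Measure Ω) [IsProbabilityMeasure P]
    (F : Ω → Euc N) (hF : Measurable F) :
    LocLowerBounded (Measure.map F P) ↔
      ∃ (μ : Measure (Euc N)) (p : Euc N → ℝ),
        μ Set.univ < 1 ∧
        (∀ x, 0 ≤ p x) ∧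
        LowerSemicontinuous p ∧
        (∫⁻ x, ENNReal.ofReal (p x) = 1 - μ Set.univ) ∧
        Measure.map F P = μ + volume.withDensity (fun x => ENNReal.ofReal (p x)) := by
  have hmap : IsProbabilityMeasure (Measure.map F P) := Measure.isProbabilityMeasure_map hF.aemeasurable
  constructor
  · rintro ⟨ε, hε, D, hDopen, ⟨x₀, hx₀⟩, hLB⟩
    obtain ⟨r, hr, hball⟩ := Metric.isOpen_iff.1 hDopen x₀ hx₀
    set B := Metric.ball x₀ r with hB
    set p : Euc N → ℝ := Set.indicator B (fun _ => ε) with hp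
    have hpmeas : ∀ x, ENNReal.ofReal (p x) = B.indicator (fun _ => ENNReal.ofReal ε) x := by
      intro x
      by_cases hx : x ∈ B <;> simp [hp, Set.indicator, hx]
    set ν : Measure (Euc N) := volume.withDensity (fun x => ENNReal.ofReal (p x)) with hν
    have hνeq : ν = ENNReal.ofReal ε • volume.restrict B := by
      rw [hν, funext hpmeas, withDensity_indicator Metric.isOpen_ball.measurableSet,
        withDensity_const]
    have hνapp : ∀ A : Set (Euc N), MeasurableSet A → ν A = ENNReal.ofReal ε * volume (A ∩ B) := by
      intro A hA
      rw [hνeq]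
      simp [Measure.restrict_apply hA]
    have hle : ν ≤ Measure.map F P := by
      refine Measure.le_iff.2 fun A hA => ?_
      rw [hνapp A hA]
      calc ENNReal.ofReal ε * volume (A ∩ B) ≤ ENNReal.ofReal ε * volume (A ∩ D) :=
            mul_le_mul_right (measure_mono (Set.inter_subset_inter_right A hball)) _
        _ ≤ Measure.map F P A := hLB A hA
    have hνfin : IsFiniteMeasure ν := by
      constructor
      rw [hνapp _ MeasurableSet.univ]
      exact lt_of_le_of_lt (mul_le_mul_right (measure_mono (Set.inter_subset_right)) _)
        (ENNReal.mul_lt_top ENNReal.ofReal_lt_top measure_ball_lt_top)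
    have hcancel : Measure.map F P - ν + ν = Measure.map F P :=
      Measure.sub_add_cancel_of_le hle
    have hsum : (Measure.map F P - ν) Set.univ + ν Set.univ = 1 := by
      have := congrArg (fun m : Measure (Euc N) => m Set.univ) hcancel
      simpa [Measure.add_apply] using this
    have hνpos : 0 < ν Set.univ := by
      rw [hνapp _ MeasurableSet.univ]
      simp only [Set.univ_inter]
      exact ENNReal.mul_pos (ENNReal.ofReal_pos.2 hε).ne'
        (Metric.measure_ball_pos volume x₀ hr).ne'
    have hνne : ν Set.univ ≠ ⊤ := hνfin.measure_univ_lt_top.ne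
    have hμfin : (Measure.map F P - ν) Set.univ ≠ ⊤ := by
      intro h
      rw [h] at hsum
      simp at hsum
    refine ⟨Measure.map F P - ν, p, ?_, ?_, ?_, ?_, ?_⟩
    · have : (Measure.map F P - ν) Set.univ < (Measure.map F P - ν) Set.univ + ν Set.univ :=
        ENNReal.lt_add_right hμfin hνpos.ne'
      rwa [hsum] at this
    · intro x
      exact Set.indicator_nonneg (fun _ _ => hε.le) x
    · exact Metric.isOpen_ball.lowerSemicontinuous_indicator hε.le
    · have hpint : ∫⁻ x, ENNReal.ofReal (p x) = ν Set.univ := by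
        rw [hν, withDensity_apply _ MeasurableSet.univ, Measure.restrict_univ]
      rw [hpint]
      exact ENNReal.eq_sub_of_add_eq hμfin (by rw [add_comm]; exact hsum)
    · rw [← hν]
      exact hcancel.symm
  · rintro ⟨μ, p, hμ, hp0, hlsc, hint, heq⟩
    have hpmeas : Measurable p := hlsc.measurable
    have hpos : 0 < ∫⁻ x, ENNReal.ofReal (p x) := by
      rw [hint]
      exact tsub_pos_of_lt hμ
    obtain ⟨x₀, hx₀⟩ : ∃ x, 0 < p x := by
      by_contra h
      push_neg at h
      have : ∀ x, ENNReal.ofReal (p x) = 0 := fun x => by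
        simp [ENNReal.ofReal_eq_zero.2 (h x)]
      simp [this] at hpos
    refine ⟨p x₀ / 2, by linarith, {x | p x₀ / 2 < p x}, hlsc.isOpen_preimage _, ⟨x₀, by
      simp only [Set.mem_setOf_eq]; linarith⟩, ?_⟩
    intro A hA
    set D := {x | p x₀ / 2 < p x} with hD
    have hDmeas : MeasurableSet D := (hlsc.isOpen_preimage _).measurableSet
    calc ENNReal.ofReal (p x₀ / 2) * volume (A ∩ D)
        = ∫⁻ x in A ∩ D, ENNReal.ofReal (p x₀ / 2) := by
          rw [setLIntegral_const, mul_comm]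
      _ ≤ ∫⁻ x in A ∩ D, ENNReal.ofReal (p x) := by
          refine setLIntegral_mono (hpmeas.ennreal_ofReal) fun x hx => ?_
          exact ENNReal.ofReal_le_ofReal hx.2.le
      _ ≤ ∫⁻ x in A, ENNReal.ofReal (p x) := by
          exact lintegral_mono_set Set.inter_subset_left
      _ = volume.withDensity (fun x => ENNReal.ofReal (p x)) A := by
          rw [withDensity_apply _ hA]
      _ ≤ Measure.map F P A := by
          rw [heq, Measure.add_apply]
          exact le_add_self
end
end

section
/- Let F be a square integrable random variable in ℝ^N whose law μ_F is locally lower bounded by the Lebesgue measure. Then the covariance matrix C(F) of F, with entries C^{i,j}(F) = E((F^i − E F^i)(F^j − E F^j)), is invertible (in fact positive definite: inf_{|ξ|=1} ⟨C(F)ξ, ξ⟩ > 0). -/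
open MeasureTheory ProbabilityTheory Filter

noncomputable section

open BallyCaramellino

namespace BCAux

open BallyCaramellino

lemma abs_apply_le_norm {N : ℕ} (x : Euc N) (i : Fin N) : |x i| ≤ ‖x‖ := by
  rw [EuclideanSpace.norm_eq]
  calc |x i| = Real.sqrt (|x i| ^ 2) := by rw [Real.sqrt_sq (abs_nonneg _)]
  _ ≤ _ := by
      apply Real.sqrt_le_sqrt
      simp only [Real.norm_eq_abs, sq_abs]
      exact Finset.single_le_sum (f := fun j => x j ^ 2) (fun j _ => sq_nonneg _)
        (Finset.mem_univ i)

noncomputable def lmap {N : ℕ} (ξ : Euc N) : Euc N →ₗ[ℝ] ℝ where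
  toFun x := ∑ i, ξ i * x i
  map_add' x y := by
    simp only [PiLp.add_apply, mul_add, Finset.sum_add_distrib]
  map_smul' r x := by
    simp only [PiLp.smul_apply, smul_eq_mul, RingHom.id_apply, Finset.mul_sum]
    exact Finset.sum_congr rfl fun i _ => by ring

theorem hyperplane_null {N : ℕ} {ξ : Euc N} {i : Fin N} (hi : ξ i ≠ 0) (c : ℝ) :
    volume {x : Euc N | ∑ j, ξ j * x j = c} = 0 := by
  set L := lmap ξ with hL
  have hLe : ∀ x, L x = ∑ j, ξ j * x j := fun x => rfl
  have hsingle : L (EuclideanSpace.single i (1:ℝ)) = ξ i := by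
    rw [hLe]
    simp [EuclideanSpace.single_apply]
  have hker : LinearMap.ker L ≠ ⊤ := by
    intro h
    have : EuclideanSpace.single i (1:ℝ) ∈ LinearMap.ker L := h ▸ Submodule.mem_top
    rw [LinearMap.mem_ker, hsingle] at this
    exact hi this
  set x₀ : Euc N := (c / ξ i) • EuclideanSpace.single i (1:ℝ) with hx₀
  have hLx₀ : L x₀ = c := by
    rw [hx₀, _root_.map_smul, hsingle, smul_eq_mul, div_mul_cancel₀ _ hi]
  have hset : {x : Euc N | ∑ j, ξ j * x j = c} =
      (fun x => -x₀ + x) ⁻¹' ((LinearMap.ker L : Submodule ℝ (Euc N)) : Set (Euc N)) := by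
    ext x
    simp only [Set.mem_setOf_eq, Set.mem_preimage, SetLike.mem_coe, LinearMap.mem_ker,
      map_add, map_neg, hLx₀, ← hLe]
    constructor
    · intro h; rw [h]; ring
    · intro h; linarith
  rw [hset, measure_preimage_add]
  exact Measure.addHaar_submodule volume _ hker

lemma quadform_aux {N : ℕ} {Ω : Type} [MeasurableSpace Ω] (P : Measure Ω)
    (G : Fin N → Ω → ℝ)
    (hGint : ∀ i j, Integrable (fun ω => G i ω * G j ω) P) (ξ : Fin N → ℝ) :
    ∑ i, ∑ j, ξ i * ξ j * ∫ ω, G i ω * G j ω ∂P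
      = ∫ ω, (∑ i, ξ i * G i ω) ^ 2 ∂P := by
  have hterm : ∀ i j : Fin N,
      Integrable (fun ω => (ξ i * G i ω) * (ξ j * G j ω)) P := by
    intro i j
    have h : (fun ω => (ξ i * G i ω) * (ξ j * G j ω))
        = fun ω => (ξ i * ξ j) * (G i ω * G j ω) := by
      funext ω; ring
    rw [h]; exact (hGint i j).const_mul _
  have hsq : (fun ω => (∑ i, ξ i * G i ω) ^ 2)
      = fun ω => ∑ i, ∑ j, (ξ i * G i ω) * (ξ j * G j ω) := by
    funext ω; rw [sq, Finset.sum_mul_sum]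
  calc ∑ i, ∑ j, ξ i * ξ j * ∫ ω, G i ω * G j ω ∂P
      = ∑ i, ∑ j, ∫ ω, (ξ i * G i ω) * (ξ j * G j ω) ∂P := by
        refine Finset.sum_congr rfl fun i _ => Finset.sum_congr rfl fun j _ => ?_
        rw [← integral_const_mul]
        congr 1; funext ω; ring
    _ = ∫ ω, ∑ i, ∑ j, (ξ i * G i ω) * (ξ j * G j ω) ∂P := by
        rw [integral_finset_sum _ (fun i _ => integrable_finset_sum _ (fun j _ => hterm i j))]
        exact Finset.sum_congr rfl fun i _ =>
          (integral_finset_sum _ (fun j _ => hterm i j)).symm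
    _ = ∫ ω, (∑ i, ξ i * G i ω) ^ 2 ∂P := by rw [hsq]

lemma sq_integrable_aux {N : ℕ} {Ω : Type} [MeasurableSpace Ω] (P : Measure Ω)
    (G : Fin N → Ω → ℝ)
    (hGint : ∀ i j, Integrable (fun ω => G i ω * G j ω) P) (ξ : Fin N → ℝ) :
    Integrable (fun ω => (∑ i, ξ i * G i ω) ^ 2) P := by
  have hterm : ∀ i j : Fin N,
      Integrable (fun ω => (ξ i * G i ω) * (ξ j * G j ω)) P := by
    intro i j
    have h : (fun ω => (ξ i * G i ω) * (ξ j * G j ω))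
        = fun ω => (ξ i * ξ j) * (G i ω * G j ω) := by
      funext ω; ring
    rw [h]; exact (hGint i j).const_mul _
  have hsq : (fun ω => (∑ i, ξ i * G i ω) ^ 2)
      = fun ω => ∑ i, ∑ j, (ξ i * G i ω) * (ξ j * G j ω) := by
    funext ω; rw [sq, Finset.sum_mul_sum]
  rw [hsq]
  exact integrable_finset_sum _ fun i _ => integrable_finset_sum _ fun j _ => hterm i j

end BCAux

open BCAux

/-- if `F` is square integrable and its law is locally lower bounded by the
Lebesgue measure, then the covariance matrix `C(F)` is invertible, and in fact positive
definite: `inf_{|ξ|=1} ⟨C(F)ξ, ξ⟩ > 0`. -/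
theorem stmt2 {N : ℕ} {Ω : Type} [MeasurableSpace Ω] (P : Measure Ω) [IsProbabilityMeasure P]
    (F : Ω → Euc N) (hF : Measurable F)
    (hlb : LocLowerBounded (Measure.map F P))
    (hL2 : Integrable (fun ω => ‖F ω‖ ^ 2) P) :
    IsUnit (covMatrix P F).det ∧
    ∃ c : ℝ, 0 < c ∧ ∀ ξ : Euc N, ‖ξ‖ = 1 →
      c ≤ dotProduct (fun i => ξ i) ((covMatrix P F).mulVec fun i => ξ i) := by
  classical
  -- the centred coordinates
  set G : Fin N → Ω → ℝ := fun i ω => F ω i - ∫ ω', F ω' i ∂P with hG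
  have hFiMeas : ∀ i : Fin N, Measurable fun ω => F ω i :=
    fun i => (EuclideanSpace.proj i : Euc N →L[ℝ] ℝ).continuous.measurable.comp hF
  have hGint : ∀ i j : Fin N, Integrable (fun ω => G i ω * G j ω) P := by
    intro i j
    have hmeas : AEStronglyMeasurable (fun ω => G i ω * G j ω) P :=
      (((hFiMeas i).sub measurable_const).mul
        ((hFiMeas j).sub measurable_const)).aestronglyMeasurable
    refine Integrable.mono'
      (g := fun ω => 2 * ‖F ω‖ ^ 2 +
        ((∫ ω', F ω' i ∂P) ^ 2 + (∫ ω', F ω' j ∂P) ^ 2)) ?_ hmeas ?_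
    · exact (hL2.const_mul 2).add (integrable_const _)
    · filter_upwards with ω
      have hi := abs_apply_le_norm (F ω) i
      have hj := abs_apply_le_norm (F ω) j
      have hi' := abs_nonneg (F ω i)
      have hj' := abs_nonneg (F ω j)
      have hsi := sq_abs (F ω i)
      have hsj := sq_abs (F ω j)
      have hi2 : F ω i ^ 2 ≤ ‖F ω‖ ^ 2 := by nlinarith
      have hj2 : F ω j ^ 2 ≤ ‖F ω‖ ^ 2 := by nlinarith
      rw [Real.norm_eq_abs, abs_le]
      simp only [hG]
      constructor <;>
        nlinarith [sq_nonneg ((F ω i - ∫ ω', F ω' i ∂P) + (F ω j - ∫ ω', F ω' j ∂P)),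
          sq_nonneg ((F ω i - ∫ ω', F ω' i ∂P) - (F ω j - ∫ ω', F ω' j ∂P)),
          sq_nonneg (F ω i + ∫ ω', F ω' i ∂P), sq_nonneg (F ω j + ∫ ω', F ω' j ∂P),
          sq_nonneg (F ω i), sq_nonneg (F ω j)]
  -- identification of the quadratic form
  have hdot : ∀ ξ : Euc N,
      dotProduct (fun i => ξ i) ((covMatrix P F).mulVec fun i => ξ i)
        = ∫ ω, (∑ i, ξ i * G i ω) ^ 2 ∂P := by
    intro ξ
    rw [← quadform_aux P G hGint (fun i => ξ i)]
    simp only [dotProduct, Matrix.mulVec, covMatrix, Matrix.of_apply, Finset.mul_sum, hG]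
    exact Finset.sum_congr rfl fun i _ => Finset.sum_congr rfl fun j _ => by ring
  -- pointwise positivity on the unit sphere
  have hpos : ∀ ξ : Euc N, ‖ξ‖ = 1 →
      0 < dotProduct (fun i => ξ i) ((covMatrix P F).mulVec fun i => ξ i) := by
    intro ξ hξ
    rw [hdot ξ]
    rcases lt_or_eq_of_le (integral_nonneg (f := fun ω => (∑ i, ξ i * G i ω) ^ 2) (fun ω => sq_nonneg (∑ i, ξ i * G i ω))
      (μ := P)) with h | h
    · exact h
    exfalso
    -- the linear statistic is a.s. constant
    have hae : ∀ᵐ ω ∂P, (∑ i, ξ i * G i ω) = 0 := by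
      have h0 : (fun ω => (∑ i, ξ i * G i ω) ^ 2) =ᵐ[P] 0 :=
        (integral_eq_zero_iff_of_nonneg (fun ω => sq_nonneg _)
          (sq_integrable_aux P G hGint (fun i => ξ i))).mp h.symm
      filter_upwards [h0] with ω hω
      exact pow_eq_zero_iff two_ne_zero |>.mp hω
    set c : ℝ := ∑ i, ξ i * ∫ ω', F ω' i ∂P with hc
    have haec : ∀ᵐ ω ∂P, (∑ j, ξ j * F ω j) = c := by
      filter_upwards [hae] with ω hω
      have : ∑ i, ξ i * G i ω = (∑ j, ξ j * F ω j) - c := by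
        rw [hc, ← Finset.sum_sub_distrib]
        exact Finset.sum_congr rfl fun i _ => by rw [hG]; ring
      rw [this] at hω
      linarith
    -- there is a nonzero coordinate
    have hξne : ∃ i, ξ i ≠ 0 := by
      by_contra h'
      push_neg at h'
      have : ‖ξ‖ = 0 := by
        rw [EuclideanSpace.norm_eq]
        simp [h']
      rw [hξ] at this
      norm_num at this
    obtain ⟨i, hi⟩ := hξne
    -- the hyperplane
    set H : Set (Euc N) := {x : Euc N | ∑ j, ξ j * x j = c} with hH
    have hLmeas : Measurable (fun x : Euc N => ∑ j, ξ j * x j) :=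
      Finset.measurable_sum _ fun j _ => measurable_const.mul (EuclideanSpace.proj j : Euc N →L[ℝ] ℝ).continuous.measurable
    have hHm : MeasurableSet H :=
      hLmeas (measurableSet_singleton c)
    have hμHc : Measure.map F P Hᶜ = 0 := by
      rw [Measure.map_apply hF hHm.compl]
      have : F ⁻¹' Hᶜ = {ω | ¬ (∑ j, ξ j * F ω j = c)} := rfl
      rw [this]
      exact ae_iff.mp haec
    obtain ⟨ε₀, hε₀, D₀, hD₀open, hD₀ne, hLB⟩ := hlb
    have hvol0 : volume (Hᶜ ∩ D₀) = 0 := by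
      have h1 := hLB Hᶜ hHm.compl
      rw [hμHc, le_zero_iff, mul_eq_zero] at h1
      rcases h1 with h1 | h1
      · exact absurd h1 (ENNReal.ofReal_pos.mpr hε₀).ne'
      · exact h1
    have hHnull : volume H = 0 := hyperplane_null hi c
    have hsub : D₀ ⊆ (Hᶜ ∩ D₀) ∪ H := by
      intro x hx
      by_cases hxH : x ∈ H
      · exact Or.inr hxH
      · exact Or.inl ⟨hxH, hx⟩
    have : volume D₀ = 0 := by
      refine le_antisymm ?_ zero_le
      calc volume D₀ ≤ volume ((Hᶜ ∩ D₀) ∪ H) := measure_mono hsub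
        _ ≤ volume (Hᶜ ∩ D₀) + volume H := measure_union_le _ _
        _ = 0 := by rw [hvol0, hHnull, add_zero]
    exact (hD₀open.measure_pos volume hD₀ne).ne' this
  -- existence of a uniform lower bound on the sphere
  have hcex : ∃ c : ℝ, 0 < c ∧ ∀ ξ : Euc N, ‖ξ‖ = 1 →
      c ≤ dotProduct (fun i => ξ i) ((covMatrix P F).mulVec fun i => ξ i) := by
    by_cases hN : N = 0
    · refine ⟨1, one_pos, fun ξ hξ => ?_⟩
      exfalso
      subst hN
      have : ξ = 0 := by ext i; exact i.elim0
      rw [this, norm_zero] at hξ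
      norm_num at hξ
    · have hQc : Continuous (fun ξ : Euc N =>
          dotProduct (fun i => ξ i) ((covMatrix P F).mulVec fun i => ξ i)) := by
        show Continuous (fun ξ : Euc N => ∑ i, ξ i * ∑ j, covMatrix P F i j * ξ j)
        exact continuous_finset_sum _ fun i _ => (EuclideanSpace.proj i : Euc N →L[ℝ] ℝ).continuous.mul
          (continuous_finset_sum _ fun j _ => continuous_const.mul (EuclideanSpace.proj j : Euc N →L[ℝ] ℝ).continuous)
      have hne : (Metric.sphere (0 : Euc N) 1).Nonempty := by
        refine ⟨EuclideanSpace.single ⟨0, Nat.pos_of_ne_zero hN⟩ 1, ?_⟩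
        rw [mem_sphere_zero_iff_norm]
        simp [EuclideanSpace.norm_single]
      obtain ⟨ξ₀, hξ₀mem, hξ₀min⟩ :=
        (isCompact_sphere (0 : Euc N) 1).exists_isMinOn hne hQc.continuousOn
      refine ⟨_, hpos ξ₀ (mem_sphere_zero_iff_norm.mp hξ₀mem), fun ξ hξ => ?_⟩
      exact hξ₀min (mem_sphere_zero_iff_norm.mpr hξ)
  obtain ⟨c, hc, hcle⟩ := hcex
  refine ⟨?_, ⟨c, hc, hcle⟩⟩
  rw [isUnit_iff_ne_zero]
  intro hdet
  obtain ⟨v, hv0, hveq⟩ := Matrix.exists_mulVec_eq_zero_iff.mpr hdet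
  set ξ' : Euc N := (EuclideanSpace.equiv (Fin N) ℝ).symm v with hξ'
  have hξ'v : (fun i => ξ' i) = v := rfl
  have hξ'ne : ξ' ≠ 0 := by
    intro h
    apply hv0
    funext i
    have : ξ' i = 0 := by rw [h]; rfl
    rw [← hξ'v]
    exact this
  set u : Euc N := ‖ξ'‖⁻¹ • ξ' with hu
  have hunorm : ‖u‖ = 1 := by
    rw [hu, norm_smul, norm_inv, norm_norm,
      inv_mul_cancel₀ (norm_ne_zero_iff.mpr hξ'ne)]
  have hle := hcle u hunorm
  have huv : (fun i => u i) = ‖ξ'‖⁻¹ • v := by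
    funext i
    rw [hu]
    simp [PiLp.smul_apply, smul_eq_mul, ← hξ'v]
  rw [huv, Matrix.mulVec_smul, hveq, smul_zero, dotProduct_zero] at hle
  linarith
end
end

section
/- For every k ≥ 1 and every t ≥ 0, the operator Ψ^{(k)}_t admits the representation Ψ^{(k)}_t = Σ_{i=1}^{[t/3]} Q_{i−1}(k) 𝒜^i_t (as differential operators, i.e. the identity holds applied to any smooth function with bounded derivatives), where Q_0(k) = 1 and, for l ≥ 1, Q_l(k) = Σ_{j=l+1}^k Q_{l−1}(j−1). Moreover, Q_l(k) = 0 whenever k ≤ l and Q_l(k) > 0 whenever k ≥ l+1. -/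
open MeasureTheory ProbabilityTheory Filter

noncomputable section

open BallyCaramellino


section Helpers

open Finset

variable {N : ℕ}

theorem hockey (l k : ℕ) : ∑ j ∈ Finset.Icc (l+2) k, ((j-2).choose l) = (k-1).choose (l+1) := by
  induction k with
  | zero => simp
  | succ k ih =>
    by_cases h : l + 2 ≤ k + 1
    · obtain ⟨m, rfl⟩ : ∃ m, k = m + 1 := ⟨k - 1, by omega⟩
      rw [Finset.sum_Icc_succ_top h, ih]
      show m.choose (l+1) + m.choose l = (m+1).choose (l+1)
      rw [Nat.choose_succ_succ', add_comm]
    · rw [Finset.Icc_eq_empty (by omega), Finset.sum_empty]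
      exact (Nat.choose_eq_zero_of_lt (by omega)).symm

theorem Qcoef_eq (l : ℕ) : ∀ k, 1 ≤ k → Qcoef l k = ((k-1).choose l : ℝ) := by
  induction l with
  | zero => intro k hk; simp [Qcoef]
  | succ l ih =>
    intro k hk
    have h : ∀ j ∈ Finset.Icc (l+2) k, Qcoef l (j-1) = (((j-2).choose l : ℕ) : ℝ) := by
      intro j hj
      have hj' := Finset.mem_Icc.mp hj
      rw [ih (j-1) (by omega)]
      norm_num
      congr 1
    calc Qcoef (l+1) k = ∑ j ∈ Finset.Icc (l+2) k, Qcoef l (j-1) := rfl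
      _ = ∑ j ∈ Finset.Icc (l+2) k, (((j-2).choose l : ℕ) : ℝ) := Finset.sum_congr rfl h
      _ = ((k-1).choose (l+1) : ℝ) := by exact_mod_cast congrArg (Nat.cast : ℕ → ℝ) (hockey l k)

theorem pderiv_contDiff {f : Euc N → ℝ} (hf : ContDiff ℝ (⊤ : ℕ∞) f) (α : List (Fin N)) :
    ContDiff ℝ (⊤ : ℕ∞) (pderiv α f) := by
  induction α with
  | nil => exact hf
  | cons i α ih =>
    show ContDiff ℝ (⊤ : ℕ∞) fun x => fderiv ℝ (pderiv α f) x (EuclideanSpace.single i 1)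
    exact (ih.fderiv_right (by simp)).clm_apply contDiff_const

theorem pderiv_zero (α : List (Fin N)) :
    pderiv α (fun _ => (0:ℝ)) = fun _ => 0 := by
  induction α with
  | nil => rfl
  | cons i α ih =>
    funext x
    show fderiv ℝ (pderiv α fun _ => (0:ℝ)) x (EuclideanSpace.single i 1) = 0
    rw [ih]
    simp [fderiv_const]

theorem pderiv_add {f g : Euc N → ℝ} (hf : ContDiff ℝ (⊤ : ℕ∞) f) (hg : ContDiff ℝ (⊤ : ℕ∞) g)
    (α : List (Fin N)) :
    pderiv α (fun x => f x + g x) = fun x => pderiv α f x + pderiv α g x := by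
  induction α with
  | nil => rfl
  | cons i α ih =>
    funext x
    show fderiv ℝ (pderiv α fun x => f x + g x) x (EuclideanSpace.single i 1) = _
    rw [ih]
    rw [fderiv_fun_add ((pderiv_contDiff hf α).differentiable (by simp) x)
      ((pderiv_contDiff hg α).differentiable (by simp) x)]
    rfl

theorem pderiv_const_mul {f : Euc N → ℝ} (hf : ContDiff ℝ (⊤ : ℕ∞) f) (c : ℝ)
    (α : List (Fin N)) :
    pderiv α (fun x => c * f x) = fun x => c * pderiv α f x := by
  induction α with
  | nil => rfl
  | cons i α ih =>
    funext x
    show fderiv ℝ (pderiv α fun x => c * f x) x (EuclideanSpace.single i 1) = _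
    rw [ih, fderiv_const_mul ((pderiv_contDiff hf α).differentiable (by simp) x)]
    rfl

variable (μ : Measure (Euc N))

theorem Psi_contDiff {f : Euc N → ℝ} (hf : ContDiff ℝ (⊤ : ℕ∞) f) (t : ℕ) :
    ContDiff ℝ (⊤ : ℕ∞) (Psi μ t f) := by
  unfold Psi msum
  apply ContDiff.sum; intro p _
  apply ContDiff.mul contDiff_const
  apply ContDiff.sum; intro a _
  apply ContDiff.sum; intro b _
  exact ContDiff.mul contDiff_const (pderiv_contDiff hf _)

theorem Psi_zero (t : ℕ) : Psi μ t (fun _ => (0:ℝ)) = fun _ => 0 := by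
  funext x
  unfold Psi msum
  simp [pderiv_zero]

theorem Psi_add {f g : Euc N → ℝ} (hf : ContDiff ℝ (⊤ : ℕ∞) f) (hg : ContDiff ℝ (⊤ : ℕ∞) g)
    (t : ℕ) (x : Euc N) :
    Psi μ t (fun y => f y + g y) x = Psi μ t f x + Psi μ t g x := by
  unfold Psi msum
  simp only [pderiv_add hf hg, mul_add, Finset.sum_add_distrib, Finset.mul_sum]

theorem Psi_const_mul {f : Euc N → ℝ} (hf : ContDiff ℝ (⊤ : ℕ∞) f) (c : ℝ) (t : ℕ) (x : Euc N) :
    Psi μ t (fun y => c * f y) x = c * Psi μ t f x := by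
  unfold Psi msum
  simp only [pderiv_const_mul hf c, Finset.mul_sum]
  refine Finset.sum_congr rfl fun p _ => ?_
  refine Finset.sum_congr rfl fun a _ => ?_
  refine Finset.sum_congr rfl fun b _ => ?_
  ring

theorem Psi_apply_sum {ι : Type*} (s : Finset ι) (c : ι → ℝ) (F : ι → Euc N → ℝ)
    (hF : ∀ i ∈ s, ContDiff ℝ (⊤ : ℕ∞) (F i)) (t : ℕ) (x : Euc N) :
    Psi μ t (fun y => ∑ i ∈ s, c i * F i y) x = ∑ i ∈ s, c i * Psi μ t (F i) x := by
  classical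
  induction s using Finset.induction with
  | empty => simp only [Finset.sum_empty]; rw [Psi_zero]
  | @insert a s ha ih =>
    have hs : ContDiff ℝ (⊤ : ℕ∞) (fun y => ∑ i ∈ s, c i * F i y) :=
      ContDiff.sum fun i hi => contDiff_const.mul (hF i (Finset.mem_insert_of_mem hi))
    have ha' : ContDiff ℝ (⊤ : ℕ∞) (fun y => c a * F a y) :=
      contDiff_const.mul (hF a (Finset.mem_insert_self a s))
    simp only [Finset.sum_insert ha]
    rw [Psi_add μ ha' hs, Psi_const_mul μ (hF a (Finset.mem_insert_self a s)),
      ih (fun i hi => hF i (Finset.mem_insert_of_mem hi))]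

theorem Aop_contDiff {f : Euc N → ℝ} (hf : ContDiff ℝ (⊤ : ℕ∞) f) :
    ∀ i t, ContDiff ℝ (⊤ : ℕ∞) (Aop μ i t f) := by
  intro i
  induction i using Nat.twoStepInduction with
  | zero => intro t; exact contDiff_const
  | one => intro t; exact Psi_contDiff μ hf t
  | more i _ ih =>
    intro t
    show ContDiff ℝ (⊤ : ℕ∞) fun x => ∑ p ∈ Finset.range (t + 1), Psi μ p (Aop μ (i+1) (t-p) f) x
    exact ContDiff.sum fun p _ => Psi_contDiff μ (ih (t - p)) p

end Helpers

section GaussianAnalytic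

open Real

lemma int_exp : ∫ s : ℝ, Real.exp (-s^2/2) = Real.sqrt (2*Real.pi) := by
  have h : (fun s : ℝ => Real.exp (-s^2/2)) = fun s => Real.exp (-(1/2:ℝ) * s^2) :=
    funext fun s => congrArg Real.exp (by ring)
  rw [h, integral_gaussian, show (Real.pi/(1/2:ℝ)) = 2*Real.pi by ring]

lemma integrable_exp_gauss : Integrable (fun s : ℝ => Real.exp (-s^2/2)) := by
  have h := integrable_exp_neg_mul_sq (show (0:ℝ) < 1/2 by norm_num)
  exact h.congr (Filter.Eventually.of_forall fun s => congrArg Real.exp (by ring))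

lemma integrable_x_exp_gauss : Integrable (fun s : ℝ => s * Real.exp (-s^2/2)) := by
  have h := integrable_mul_exp_neg_mul_sq (show (0:ℝ) < 1/2 by norm_num)
  exact h.congr (Filter.Eventually.of_forall fun s =>
    congrArg (fun z => s * Real.exp z) (by ring : -(1/2:ℝ)*s^2 = -s^2/2))

lemma integrable_x2_exp_gauss : Integrable (fun s : ℝ => s^2 * Real.exp (-s^2/2)) := by
  have h := integrable_rpow_mul_exp_neg_mul_sq (show (0:ℝ) < 1/2 by norm_num)
    (show (-1:ℝ) < 2 by norm_num)
  refine h.congr (Filter.Eventually.of_forall fun s => ?_)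
  show s ^ (2:ℝ) * Real.exp (-(1/2:ℝ) * s^2) = s^2 * Real.exp (-s^2/2)
  rw [Real.rpow_two]
  exact congrArg (fun z => s^2 * Real.exp z) (by ring : -(1/2:ℝ)*s^2 = -s^2/2)

lemma int_x_exp : ∫ s : ℝ, s * Real.exp (-s^2/2) = 0 := by
  have h := integral_neg_eq_self (fun s : ℝ => s * Real.exp (-s^2/2)) volume
  simp only [neg_sq, neg_mul] at h
  rw [integral_neg] at h
  linarith

lemma hasDerivAt_negexp (x : ℝ) :
    HasDerivAt (fun y : ℝ => -Real.exp (-y^2/2)) (x * Real.exp (-x^2/2)) x := by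
  have h1 : HasDerivAt (fun y : ℝ => -y^2/2) (-x) x := by
    have := ((hasDerivAt_pow 2 x).neg).div_const 2
    exact this.congr_deriv (by show -(((2:ℕ):ℝ) * x ^ 1) / 2 = -x; push_cast; ring)
  have h2 := (h1.exp).neg
  exact h2.congr_deriv (by ring)

lemma parts (R : ℝ) : ∫ s in (-R)..R, s^2 * Real.exp (-s^2/2)
    = -(2*(R * Real.exp (-R^2/2))) + ∫ s in (-R)..R, Real.exp (-s^2/2) := by
  have hcont : Continuous fun y : ℝ => y * Real.exp (-y^2/2) := by
    continuity
  have h := intervalIntegral.integral_mul_deriv_eq_deriv_mul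
    (u := fun y : ℝ => y) (u' := fun _ => (1:ℝ))
    (v := fun y : ℝ => -Real.exp (-y^2/2)) (v' := fun y => y * Real.exp (-y^2/2))
    (a := -R) (b := R)
    (fun x _ => hasDerivAt_id x) (fun x _ => hasDerivAt_negexp x)
    intervalIntegrable_const (hcont.intervalIntegrable _ _)
  have hc : ∫ s in (-R)..R, s^2 * Real.exp (-s^2/2)
      = ∫ s in (-R)..R, s * (s * Real.exp (-s^2/2)) :=
    intervalIntegral.integral_congr (fun s _ => by ring)
  rw [hc, h]
  simp only [one_mul, neg_sq]
  rw [intervalIntegral.integral_neg]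
  ring

lemma tends_boundary : Tendsto (fun R : ℝ => R * Real.exp (-R^2/2)) atTop (nhds 0) := by
  have h := rpow_mul_exp_neg_mul_sq_isLittleO_exp_neg (show (0:ℝ) < 1/2 by norm_num) 1
  have h2 : Tendsto (fun x : ℝ => Real.exp (-(1/2) * x)) atTop (nhds 0) := by
    have := Real.tendsto_exp_neg_atTop_nhds_zero.comp
      (Tendsto.const_mul_atTop (show (0:ℝ) < 1/2 by norm_num) tendsto_id)
    simpa [Function.comp_def, neg_mul] using this
  have h3 := h.isBigO.trans_tendsto h2
  have h4 : (fun x : ℝ => x ^ (1:ℝ) * Real.exp (-(1/2) * x ^ 2))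
      = fun R : ℝ => R * Real.exp (-R^2/2) := by
    funext x
    rw [Real.rpow_one]
    ring_nf
  rwa [h4] at h3

lemma int_x2_exp : ∫ s : ℝ, s^2 * Real.exp (-s^2/2) = Real.sqrt (2*Real.pi) := by
  have hT1 : Tendsto (fun R : ℝ => ∫ s in (-R)..R, s^2 * Real.exp (-s^2/2)) atTop
      (nhds (∫ s : ℝ, s^2 * Real.exp (-s^2/2))) :=
    intervalIntegral_tendsto_integral integrable_x2_exp_gauss tendsto_neg_atTop_atBot tendsto_id
  have hT0 : Tendsto (fun R : ℝ => ∫ s in (-R)..R, Real.exp (-s^2/2)) atTop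
      (nhds (Real.sqrt (2*Real.pi))) := by
    have := intervalIntegral_tendsto_integral integrable_exp_gauss tendsto_neg_atTop_atBot tendsto_id
    rwa [int_exp] at this
  have hT2 : Tendsto (fun R : ℝ => ∫ s in (-R)..R, s^2 * Real.exp (-s^2/2)) atTop
      (nhds (Real.sqrt (2*Real.pi))) := by
    have hlim := ((tends_boundary.const_mul 2).neg).add hT0
    have := hlim.congr (fun R => (parts R).symm)
    simpa using this
  exact tendsto_nhds_unique hT1 hT2


variable {N : ℕ}

lemma gaussDensity_nonneg (x : Euc N) : 0 ≤ gaussDensity N 1 x := by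
  unfold gaussDensity
  positivity

lemma gaussDensity_continuous : Continuous (gaussDensity N 1) := by
  unfold gaussDensity
  exact continuous_const.mul (((continuous_norm.pow 2).neg.div_const _).rexp)

lemma integral_stdGaussian (g : Euc N → ℝ) :
    ∫ x, g x ∂(stdGaussian N) = ∫ x, g x * gaussDensity N 1 x := by
  unfold BallyCaramellino.stdGaussian
  have hm : Measurable (fun x : Euc N => (gaussDensity N 1 x).toNNReal) :=
    (gaussDensity_continuous.measurable).real_toNNReal
  rw [show (fun x : Euc N => ENNReal.ofReal (gaussDensity N 1 x))
      = fun x => ((gaussDensity N 1 x).toNNReal : ENNReal) from rfl]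
  rw [integral_withDensity_eq_integral_smul hm g]
  refine integral_congr_ae (Filter.Eventually.of_forall fun x => ?_)
  show (gaussDensity N 1 x).toNNReal • g x = g x * gaussDensity N 1 x
  rw [NNReal.smul_def, smul_eq_mul, Real.coe_toNNReal _ (gaussDensity_nonneg x)]
  ring

lemma integral_gaussDensity_prod (g : Fin N → ℝ → ℝ) :
    ∫ x : Euc N, (∏ i, g i (x i)) * gaussDensity N 1 x
      = (2*Real.pi) ^ (-(N:ℝ)/2) * ∏ i, ∫ s : ℝ, g i s * Real.exp (-s^2/2) := by
  have hfun : ∀ x : Euc N, (∏ i, g i (x i)) * gaussDensity N 1 x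
      = (2*Real.pi) ^ (-(N:ℝ)/2) * ∏ i, (g i (x i) * Real.exp (-(x i)^2/2)) := by
    intro x
    unfold gaussDensity
    simp only [mul_one]
    have hn : -‖x‖^2/2 = ∑ i, (-(x i)^2/2) := by
      rw [EuclideanSpace.norm_eq, Real.sq_sqrt (by positivity)]
      simp only [Real.norm_eq_abs, sq_abs]
      rw [neg_div, Finset.sum_div, ← Finset.sum_neg_distrib]
      exact Finset.sum_congr rfl fun i _ => by ring
    have hexp : Real.exp (-‖x‖^2/2) = ∏ i, Real.exp (-(x i)^2/2) := by
      rw [hn, Real.exp_sum]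
    rw [hexp, Finset.prod_mul_distrib]
    ring
  rw [integral_congr_ae (Filter.Eventually.of_forall hfun), MeasureTheory.integral_const_mul]
  congr 1
  have htrans := (EuclideanSpace.volume_preserving_symm_measurableEquiv_toLp (Fin N)).symm
  rw [← htrans.integral_comp (MeasurableEquiv.measurableEmbedding _)]
  have happ : ∀ (y : Fin N → ℝ) i,
      ((MeasurableEquiv.toLp 2 (Fin N → ℝ)).symm.symm y) i = y i := fun y i => rfl
  simp_rw [happ]
  rw [MeasureTheory.integral_fintype_prod_volume_eq_prod (f := fun i (s : ℝ) => g i s * Real.exp (-s^2/2))]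

lemma const_prod_sqrt : (2*Real.pi) ^ (-(N:ℝ)/2) * Real.sqrt (2*Real.pi) ^ (N:ℕ) = 1 := by
  have h2π : (0:ℝ) < 2*Real.pi := by positivity
  rw [Real.sqrt_eq_rpow, ← Real.rpow_natCast ((2*Real.pi) ^ ((1:ℝ)/2)) N,
    ← Real.rpow_mul h2π.le, ← Real.rpow_add h2π,
    show -(N:ℝ)/2 + 1/2*(N:ℝ) = 0 by ring, Real.rpow_zero]

lemma integral_gaussDensity_one : ∫ x : Euc N, gaussDensity N 1 x = 1 := by
  have h := integral_gaussDensity_prod (N := N) (fun _ _ => (1:ℝ))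
  simp only [Finset.prod_const_one, one_mul] at h
  rw [h, int_exp, Finset.prod_const, Finset.card_univ, Fintype.card_fin, const_prod_sqrt]

lemma integral_gaussDensity_single (i : Fin N) :
    ∫ x : Euc N, x i * gaussDensity N 1 x = 0 := by
  have h := integral_gaussDensity_prod (fun j s => if j = i then s else 1)
  have hx : ∀ x : Euc N, (∏ j, (if j = i then x j else 1)) = x i := by
    intro x
    rw [Finset.prod_ite_eq' Finset.univ i (fun j => x j)]
    simp
  simp only [hx] at h
  rw [h, Finset.prod_eq_zero (Finset.mem_univ i), mul_zero]
  simp only [if_pos rfl]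
  exact int_x_exp

lemma integral_gaussDensity_pair (i j : Fin N) :
    ∫ x : Euc N, x i * x j * gaussDensity N 1 x = if i = j then 1 else 0 := by
  by_cases hij : i = j
  · subst hij
    rw [if_pos rfl]
    have h := integral_gaussDensity_prod (fun j s => if j = i then s^2 else 1)
    have hx : ∀ x : Euc N, (∏ j, (if j = i then (x j)^2 else 1)) = x i * x i := by
      intro x
      rw [Finset.prod_ite_eq' Finset.univ i (fun j => (x j)^2)]
      simp [sq]
    simp only [hx] at h
    rw [h]
    have hall : ∀ l : Fin N, (∫ s : ℝ, (if l = i then s^2 else 1) * Real.exp (-s^2/2))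
        = Real.sqrt (2*Real.pi) := by
      intro l
      by_cases hl : l = i
      · simp only [if_pos hl]
        exact int_x2_exp
      · simp only [if_neg hl, one_mul]
        exact int_exp
    rw [Finset.prod_congr rfl (fun l _ => hall l), Finset.prod_const, Finset.card_univ,
      Fintype.card_fin, const_prod_sqrt]
  · rw [if_neg hij]
    have h := integral_gaussDensity_prod
      (fun l s => (if l = i then s else 1) * (if l = j then s else 1))
    have hx : ∀ x : Euc N,
        (∏ l, ((if l = i then x l else 1) * (if l = j then x l else 1))) = x i * x j := by
      intro x
      rw [Finset.prod_mul_distrib, Finset.prod_ite_eq' Finset.univ i (fun l => x l),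
        Finset.prod_ite_eq' Finset.univ j (fun l => x l)]
      simp
    simp only [hx] at h
    rw [h, Finset.prod_eq_zero (Finset.mem_univ i), mul_zero]
    simp only [if_pos rfl, if_neg hij, mul_one]
    exact int_x_exp

end GaussianAnalytic


section DeltaVanish

variable {N : ℕ} (μF : Measure (Euc N)) [IsProbabilityMeasure μF]

theorem Delta_nil : Delta μF ([] : List (Fin N)) = 0 := by
  unfold Delta
  have h1 : ∀ x : Euc N, mprod ([]: List (Fin N)) x = 1 := fun _ => rfl
  simp only [h1]
  rw [integral_stdGaussian]
  simp only [one_mul]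
  rw [integral_gaussDensity_one]
  simp

theorem Delta_single (hmean : (∫ x, x ∂μF) = 0)
    (hmom : ∀ p : ℕ, Integrable (fun x => ‖x‖ ^ p) μF) (i : Fin N) :
    Delta μF ([i]) = 0 := by
  unfold Delta
  have h1 : ∀ x : Euc N, mprod ([i]) x = x i := fun x => by simp [mprod]
  simp only [h1]
  rw [integral_stdGaussian, integral_gaussDensity_single]
  have hid : Integrable (fun x : Euc N => x) μF := by
    have h1' := hmom 1
    simp only [pow_one] at h1'
    exact (integrable_norm_iff measurable_id.aestronglyMeasurable).mp h1'
  have hcomp := (EuclideanSpace.proj i : Euc N →L[ℝ] ℝ).integral_comp_comm hid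
  rw [hmean, map_zero] at hcomp
  simp only [sub_zero]
  exact hcomp

theorem Delta_pair (hcov : ∀ i j : Fin N, (∫ x, x i * x j ∂μF) = if i = j then 1 else 0)
    (i j : Fin N) :
    Delta μF ([i, j]) = 0 := by
  unfold Delta
  have h1 : ∀ x : Euc N, mprod ([i, j]) x = x i * x j := fun x => by simp [mprod]
  simp only [h1]
  rw [integral_stdGaussian, integral_gaussDensity_pair, hcov i j, sub_self]

end DeltaVanish

section Structure

variable {N : ℕ} (μF : Measure (Euc N)) [IsProbabilityMeasure μF]
  (hmean : (∫ x, x ∂μF) = 0)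
  (hcov : ∀ i j : Fin N, (∫ x, x i * x j ∂μF) = if i = j then 1 else 0)
  (hmom : ∀ p : ℕ, Integrable (fun x => ‖x‖ ^ p) μF)

include hmean hcov hmom

theorem Psi_small {t : ℕ} (ht : t ≤ 2) (f : Euc N → ℝ) :
    Psi μF t f = fun _ => 0 := by
  have h0 := Delta_nil μF
  have h1 := Delta_single μF hmean hmom
  have h2 := Delta_pair μF hcov
  funext x
  interval_cases t <;>
    simp [Psi, msum, Finset.sum_range_succ, List.ofFn_succ, h0, h1, h2, theta]

theorem Aop_vanish : ∀ i t (f : Euc N → ℝ), t < 3 * i → Aop μF i t f = fun _ => 0 := by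
  intro i
  induction i using Nat.twoStepInduction with
  | zero => intro t f ht; rfl
  | one =>
    intro t f ht
    exact Psi_small μF hmean hcov hmom (by omega) f
  | more i _ ih =>
    intro t f ht
    funext x
    show (∑ p ∈ Finset.range (t + 1), Psi μF p (Aop μF (i+1) (t-p) f) x) = 0
    apply Finset.sum_eq_zero
    intro p hp
    by_cases h : p ≤ 2
    · rw [Psi_small μF hmean hcov hmom h]
    · rw [ih (t-p) f (by omega), Psi_zero]

theorem Psik_eq : ∀ k, 1 ≤ k → ∀ t (f : Euc N → ℝ), ContDiff ℝ (⊤ : ℕ∞) f → ∀ x,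
    Psik μF k t f x = ∑ i ∈ Finset.range k, ((k-1).choose i : ℝ) * Aop μF (i+1) t f x := by
  intro k
  induction k with
  | zero => omega
  | succ k ihk =>
    intro _ t f hf x
    rcases Nat.eq_zero_or_pos k with rfl | hk
    · show Psi μF t f x = _
      simp [Aop]
    obtain ⟨m, rfl⟩ : ∃ m, k = m + 1 := ⟨k - 1, by omega⟩
    have ih := ihk (by omega)
    show Psik μF (m+1) t f x
        + ∑ p ∈ Finset.range (t + 1), Psi μF p (Psik μF (m+1) (t-p) f) x = _
    have hrw : ∀ p, Psik μF (m+1) (t-p) f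
        = fun y => ∑ i ∈ Finset.range (m+1), ((m:ℕ).choose i : ℝ) * Aop μF (i+1) (t-p) f y := by
      intro p
      funext y
      simpa using ih (t-p) f hf y
    have hstep : ∀ p, Psi μF p (Psik μF (m+1) (t-p) f) x
        = ∑ i ∈ Finset.range (m+1), ((m:ℕ).choose i : ℝ) * Psi μF p (Aop μF (i+1) (t-p) f) x := by
      intro p
      rw [hrw p]
      exact Psi_apply_sum μF _ _ _ (fun i _ => Aop_contDiff μF hf (i+1) (t-p)) p x
    rw [ih t f hf x]
    simp only [hstep]
    rw [Finset.sum_comm]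
    have hA : ∀ i, (∑ p ∈ Finset.range (t + 1), Psi μF p (Aop μF (i+1) (t-p) f) x)
        = Aop μF (i+2) t f x := fun i => rfl
    simp only [← Finset.mul_sum, hA]
    -- now: ∑_{i∈range(m+1)} C(m,i) A_{i+1} + ∑_{i∈range(m+1)} C(m,i) A_{i+2}
    --    = ∑_{i∈range(m+2)} C(m+1,i) A_{i+1}
    simp only [Nat.add_sub_cancel]
    rw [Finset.sum_range_succ' (fun i => ((m+1).choose i : ℝ) * Aop μF (i+1) t f x) (m+1)]
    rw [Finset.sum_range_succ' (fun i => ((m:ℕ).choose i : ℝ) * Aop μF (i+1) t f x) m]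
    have hpas : ∀ i, (((m+1).choose (i+1) : ℕ) : ℝ) = ((m:ℕ).choose i : ℝ) + ((m:ℕ).choose (i+1) : ℝ) := by
      intro i
      rw [Nat.choose_succ_succ]
      push_cast
      ring
    simp only [hpas, add_mul, Finset.sum_add_distrib]
    have hlast : ∑ i ∈ Finset.range (m+1), ((m:ℕ).choose (i+1) : ℝ) * Aop μF (i+2) t f x
        = ∑ i ∈ Finset.range m, ((m:ℕ).choose (i+1) : ℝ) * Aop μF (i+2) t f x := by
      rw [Finset.sum_range_succ]
      simp [Nat.choose_succ_self]
    rw [hlast]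
    simp only [Nat.choose_zero_right]
    push_cast
    ring

end Structure
/-- representation of `Ψ^{(k)}_t` (Proposition `miracle-real`):
`Ψ^{(k)}_t = Σ_{i=1}^{[t/3]} Q_{i-1}(k) 𝒜^i_t` on smooth functions with bounded derivatives,
together with the sign properties of the coefficients `Q_l(k)` (for `k ≥ 1`, the range in
which they occur): `Q_l(k) = 0` if `k ≤ l` and `Q_l(k) > 0` if `k ≥ l + 1`. -/
theorem stmt11 {N : ℕ} (μF : Measure (Euc N)) [IsProbabilityMeasure μF]
    (hmean : (∫ x, x ∂μF) = 0)
    (hcov : ∀ i j : Fin N, (∫ x, x i * x j ∂μF) = if i = j then 1 else 0)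
    (hmom : ∀ p : ℕ, Integrable (fun x => ‖x‖ ^ p) μF)
    (k : ℕ) (hk : 1 ≤ k) (t : ℕ) :
    (∀ f : Euc N → ℝ, ContDiff ℝ (⊤ : ℕ∞) f →
      (∀ i : ℕ, ∃ C : ℝ, ∀ x, ‖iteratedFDeriv ℝ i f x‖ ≤ C) →
      ∀ x, Psik μF k t f x =
        ∑ i ∈ Finset.Icc 1 (t / 3), Qcoef (i - 1) k * Aop μF i t f x) ∧
    (∀ l k' : ℕ, 1 ≤ k' → k' ≤ l → Qcoef l k' = 0) ∧
    (∀ l k' : ℕ, l + 1 ≤ k' → 0 < Qcoef l k') := by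
  refine ⟨?_, ?_, ?_⟩
  · intro f hf _ x
    rw [Psik_eq μF hmean hcov hmom k hk t f hf x]
    set M := max k (t / 3) with hM
    have hL : ∑ i ∈ Finset.range k, ((k-1).choose i : ℝ) * Aop μF (i+1) t f x
        = ∑ j ∈ Finset.Icc 1 M, ((k-1).choose (j-1) : ℝ) * Aop μF j t f x := by
      rw [← Finset.Ico_add_one_right_eq_Icc, Finset.sum_Ico_eq_sum_range]
      have hMk : M + 1 - 1 = M := by omega
      rw [hMk]
      rw [← Finset.sum_range_add_sum_Ico (fun i => ((k-1).choose (1+i-1) : ℝ) * Aop μF (1+i) t f x)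
        (show k ≤ M by omega)]
      have hz : ∑ i ∈ Finset.Ico k M, ((k-1).choose (1+i-1) : ℝ) * Aop μF (1+i) t f x = 0 := by
        apply Finset.sum_eq_zero
        intro i hi
        have hik : k ≤ i := (Finset.mem_Ico.mp hi).1
        have : (k-1).choose (1+i-1) = 0 := Nat.choose_eq_zero_of_lt (by omega)
        rw [this]
        simp
      rw [hz, add_zero]
      refine Finset.sum_congr rfl fun i _ => ?_
      have h1 : 1 + i - 1 = i := by omega
      have h2 : 1 + i = i + 1 := by omega
      rw [h1, h2]
    rw [hL]
    have hq : ∑ i ∈ Finset.Icc 1 (t / 3), Qcoef (i - 1) k * Aop μF i t f x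
        = ∑ i ∈ Finset.Icc 1 (t / 3), ((k-1).choose (i-1) : ℝ) * Aop μF i t f x :=
      Finset.sum_congr rfl fun j _ => by rw [Qcoef_eq (j-1) k hk]
    rw [hq]
    symm
    apply Finset.sum_subset
    · apply Finset.Icc_subset_Icc_right
      omega
    · intro j hj hj'
      have hjM := Finset.mem_Icc.mp hj
      have hjt : t / 3 < j := by
        rcases Nat.lt_or_ge (t/3) j with h | h
        · exact h
        · exact absurd (Finset.mem_Icc.mpr ⟨hjM.1, h⟩) hj'
      have hvan : Aop μF j t f = fun _ => 0 :=
        Aop_vanish μF hmean hcov hmom j t f (by omega)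
      rw [hvan]
      simp
  · intro l k' hk' hkl
    rw [Qcoef_eq l k' hk']
    have : (k'-1).choose l = 0 := Nat.choose_eq_zero_of_lt (by omega)
    rw [this, Nat.cast_zero]
  · intro l k' hk'
    rw [Qcoef_eq l k' (by omega)]
    exact_mod_cast Nat.choose_pos (by omega)
end
end
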